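/- For every real x ≥ 0, the contraction factor satisfies C(x) = 4(φ(x)² + x·φ(x)·(2Φ(x)−1) − x²·Φ(x)·(1−Φ(x))) ≤ 2/π, with equality at x = 0 (i.e., C(0) = 4·φ(0)² = 2/π < 1). -/

import Mathlib

/-- The standard normal density `φ`. -/
noncomputable def stdGauss (t : ℝ) : ℝ :=
  (Real.sqrt (2 * Real.pi))⁻¹ * Real.exp (-t ^ 2 / 2)

/-- The standard normal CDF `Φ`. -/
noncomputable def stdCDF (t : ℝ) : ℝ := ∫ s in Set.Iic t, stdGauss s

/-- The contraction factor `C(x)`. -/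
noncomputable def contractionC (x : ℝ) : ℝ :=
  4 * (stdGauss x ^ 2 + x * stdGauss x * (2 * stdCDF x - 1) -
    x ^ 2 * stdCDF x * (1 - stdCDF x))

/-!
Completing the square with `t = Φ(x) - 1/2` gives `C(x) = 4((φ(x) + x t)² - x²/4)`, and since
`φ' = -xφ` and `Φ' = φ`, `C'(x) = 8(φ(x) t - x Φ(x)(1 - Φ(x)))`. So `C` decreases on `[0, ∞)` once
`φ(x) t ≤ x Φ(x)(1 - Φ(x)) = x(1/4 - t²)`. For `x ≤ 4/5` this follows from `t ≤ φ(0) x` and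
`φ(x)(1 + x²/2) ≤ φ(0)`; for `x ≥ 4/5` from Gordon's bound `x φ(x) ≤ (x² + 1)(1 - Φ(x))` together
with `t ≤ φ(0) x ≤ x²/2`. Both regimes only need `φ(0) = 1/√(2π) ≤ 2/5`.
Hence `C(x) ≤ C(0) = 4φ(0)² = 2/π`.
-/

open Real MeasureTheory ProbabilityTheory Set Filter Topology

lemma stdGauss_eq_gaussianPDFReal : stdGauss = gaussianPDFReal 0 1 := by
  ext t; simp [stdGauss, gaussianPDFReal]

lemma stdCDF_eq_cdf : stdCDF = cdf (gaussianReal 0 1) := by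
  ext x
  rw [cdf_eq_real, measureReal_def, gaussianReal_apply_eq_integral _ one_ne_zero,
    ENNReal.toReal_ofReal (integral_nonneg fun _ ↦ gaussianPDFReal_nonneg _ _ _),
    stdCDF, stdGauss_eq_gaussianPDFReal]

lemma stdGauss_nonneg (t : ℝ) : 0 ≤ stdGauss t := by
  rw [stdGauss_eq_gaussianPDFReal]; exact gaussianPDFReal_nonneg _ _ _

lemma integrable_stdGauss : Integrable stdGauss := by
  rw [stdGauss_eq_gaussianPDFReal]; exact integrable_gaussianPDFReal _ _

lemma continuous_stdGauss : Continuous stdGauss := by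
  unfold stdGauss; fun_prop

lemma hasDerivAt_stdGauss (x : ℝ) : HasDerivAt stdGauss (-x * stdGauss x) x := by
  have h : HasDerivAt (fun t : ℝ ↦ -t ^ 2 / 2) (-x) x := by
    simpa using ((hasDerivAt_pow 2 x).neg.div_const 2).congr_deriv (by ring : _ = -x)
  unfold stdGauss
  exact (h.exp.const_mul _).congr_deriv (by ring)

lemma tendsto_stdGauss_atTop : Tendsto stdGauss atTop (𝓝 0) := by
  have h : Tendsto (fun t : ℝ ↦ -t ^ 2 / 2) atTop atBot :=
    (tendsto_neg_atTop_atBot.comp (tendsto_pow_atTop two_ne_zero)).atBot_div_const two_pos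
  have h' := (tendsto_exp_atBot.comp h).const_mul (√(2 * π))⁻¹
  rw [mul_zero] at h'
  exact h'

lemma stdGauss_zero_sq : stdGauss 0 ^ 2 = (2 * π)⁻¹ := by
  have h : stdGauss 0 = (√(2 * π))⁻¹ := by simp [stdGauss]
  rw [h, inv_pow, sq_sqrt (by positivity)]

lemma stdGauss_mul_one_add_sq_div_two_le (x : ℝ) :
    stdGauss x * (1 + x ^ 2 / 2) ≤ stdGauss 0 := by
  have h : 1 + x ^ 2 / 2 ≤ exp (x ^ 2 / 2) := by linarith [add_one_le_exp (x ^ 2 / 2)]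
  calc stdGauss x * (1 + x ^ 2 / 2) ≤ stdGauss x * exp (x ^ 2 / 2) :=
        mul_le_mul_of_nonneg_left h (stdGauss_nonneg x)
    _ = stdGauss 0 := by simp [stdGauss, mul_assoc, ← exp_add, neg_div]

lemma stdGauss_le_stdGauss_zero (x : ℝ) : stdGauss x ≤ stdGauss 0 := by
  nlinarith [stdGauss_mul_one_add_sq_div_two_le x, stdGauss_nonneg x, sq_nonneg x]

lemma hasDerivAt_stdCDF (x : ℝ) : HasDerivAt stdCDF (stdGauss x) x := by
  have h : ∀ y, stdCDF y = stdCDF 0 + ∫ s in (0 : ℝ)..y, stdGauss s := fun y ↦ by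
    rw [← intervalIntegral.integral_Iic_sub_Iic integrable_stdGauss.integrableOn
      integrable_stdGauss.integrableOn, stdCDF, stdCDF]
    ring
  rw [funext h]
  exact (intervalIntegral.integral_hasDerivAt_right integrable_stdGauss.intervalIntegrable
    continuous_stdGauss.aestronglyMeasurable.stronglyMeasurableAtFilter
    continuous_stdGauss.continuousAt).const_add _

lemma stdCDF_zero : stdCDF 0 = 1 / 2 := by
  have heven : ∀ t, stdGauss (-t) = stdGauss t := fun t ↦ by simp [stdGauss]
  have hIoi : stdCDF 0 = ∫ s in Ioi 0, stdGauss s := by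
    rw [stdCDF, ← neg_zero, ← integral_comp_neg_Iic]
    simp only [heven, neg_zero]
  have htotal := intervalIntegral.integral_Iic_add_Ioi (b := 0)
    integrable_stdGauss.integrableOn integrable_stdGauss.integrableOn
  rw [stdGauss_eq_gaussianPDFReal, integral_gaussianPDFReal_eq_one _ one_ne_zero,
    ← stdGauss_eq_gaussianPDFReal, ← stdCDF, ← hIoi] at htotal
  linarith

lemma stdCDF_nonneg (x : ℝ) : 0 ≤ stdCDF x := stdCDF_eq_cdf ▸ cdf_nonneg _ x

lemma monotone_stdCDF : Monotone stdCDF := stdCDF_eq_cdf ▸ monotone_cdf _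

lemma tendsto_stdCDF_atTop : Tendsto stdCDF atTop (𝓝 1) := stdCDF_eq_cdf ▸ tendsto_cdf_atTop _

lemma half_le_stdCDF {x : ℝ} (hx : 0 ≤ x) : 1 / 2 ≤ stdCDF x :=
  stdCDF_zero ▸ monotone_stdCDF hx

lemma stdCDF_sub_half_le {x : ℝ} (hx : 0 ≤ x) : stdCDF x - 1 / 2 ≤ stdGauss 0 * x := by
  have h := image_sub_le_mul_sub_of_deriv_le (fun y ↦ (hasDerivAt_stdCDF y).differentiableAt)
    (fun y ↦ (hasDerivAt_stdCDF y).deriv ▸ stdGauss_le_stdGauss_zero y) hx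
  rwa [stdCDF_zero, sub_zero] at h

lemma stdGauss_zero_le : stdGauss 0 ≤ 2 / 5 := by
  have hsq : stdGauss 0 ^ 2 ≤ (2 / 5) ^ 2 := by
    rw [stdGauss_zero_sq, inv_le_comm₀ (by positivity) (by norm_num)]
    linarith [pi_gt_d2]
  exact (pow_le_pow_iff_left₀ (stdGauss_nonneg 0) (by norm_num) two_ne_zero).1 hsq

/-- Gordon's lower bound for the Mills ratio. -/
lemma mul_stdGauss_div_le_one_sub_stdCDF (x : ℝ) :
    x * stdGauss x / (x ^ 2 + 1) ≤ 1 - stdCDF x := by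
  set M : ℝ → ℝ := fun s ↦ 1 - stdCDF s - s * stdGauss s / (s ^ 2 + 1)
  have hM : ∀ s, HasDerivAt M (-(2 * stdGauss s / (s ^ 2 + 1) ^ 2)) s := fun s ↦ by
    have hden : s ^ 2 + 1 ≠ 0 := by positivity
    have h := ((hasDerivAt_stdCDF s).const_sub 1).sub
      (((hasDerivAt_id s).mul (hasDerivAt_stdGauss s)).div
        ((hasDerivAt_pow 2 s).add_const 1) hden)
    refine h.congr_deriv ?_
    simp only [id, Pi.mul_apply]
    field_simp
    ring
  have hanti : Antitone M := antitone_of_deriv_nonpos (fun s ↦ (hM s).differentiableAt)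
    fun s ↦ by rw [(hM s).deriv, neg_nonpos]; have := stdGauss_nonneg s; positivity
  have hratio : Tendsto (fun s ↦ s * stdGauss s / (s ^ 2 + 1)) atTop (𝓝 0) := by
    refine squeeze_zero_norm (fun s ↦ ?_) tendsto_stdGauss_atTop
    rw [norm_div, norm_mul, Real.norm_of_nonneg (stdGauss_nonneg s),
      Real.norm_of_nonneg (by positivity : 0 ≤ s ^ 2 + 1), div_le_iff₀ (by positivity)]
    have habs : |s| ≤ s ^ 2 + 1 := by nlinarith [sq_abs s, sq_nonneg (|s| - 1)]
    exact mul_le_mul_of_nonneg_right habs (stdGauss_nonneg s) |>.trans_eq (mul_comm _ _)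
  have hlim : Tendsto M atTop (𝓝 0) := by
    simpa using (tendsto_stdCDF_atTop.const_sub 1).sub hratio
  linarith [hanti.le_of_tendsto hlim x]

lemma stdGauss_mul_stdCDF_sub_half_le_of_le {x : ℝ} (hx₀ : 0 ≤ x) (hx : x ≤ 4 / 5) :
    stdGauss x * (stdCDF x - 1 / 2) ≤ x * (stdCDF x * (1 - stdCDF x)) := by
  set c := stdGauss 0
  set t := stdCDF x - 1 / 2
  have ht₀ : 0 ≤ t := sub_nonneg.2 (half_le_stdCDF hx₀)
  have ht : t ≤ c * x := stdCDF_sub_half_le hx₀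
  have hc₀ : 0 ≤ c := stdGauss_nonneg 0
  have hc : c ≤ 2 / 5 := stdGauss_zero_le
  have hpos : 0 < 1 + x ^ 2 / 2 := by positivity
  have hleft : stdGauss x * t * (1 + x ^ 2 / 2) ≤ c ^ 2 * x := by
    calc stdGauss x * t * (1 + x ^ 2 / 2) = stdGauss x * (1 + x ^ 2 / 2) * t := by ring
      _ ≤ c * t := mul_le_mul_of_nonneg_right (stdGauss_mul_one_add_sq_div_two_le x) ht₀
      _ ≤ c * (c * x) := mul_le_mul_of_nonneg_left ht hc₀
      _ = c ^ 2 * x := by ring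
  have hright : c ^ 2 * x ≤ x * (1 / 4 - t ^ 2) * (1 + x ^ 2 / 2) := by
    have ht2 : t ^ 2 ≤ (c * x) ^ 2 := pow_le_pow_left₀ ht₀ ht 2
    have hc2 : c ^ 2 ≤ 4 / 25 := by nlinarith
    have hx2 : x ^ 2 ≤ 16 / 25 := by nlinarith
    have hpoly : c ^ 2 * (1 + x ^ 2 * (1 + x ^ 2 / 2)) ≤ (1 + x ^ 2 / 2) / 4 := by
      nlinarith [mul_nonneg (sq_nonneg x) (sub_nonneg.2 hx2),
        mul_nonneg (sq_nonneg x) (sq_nonneg x),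
        mul_le_mul_of_nonneg_right hc2 (by positivity : (0 : ℝ) ≤ 1 + x ^ 2 * (1 + x ^ 2 / 2))]
    nlinarith [mul_le_mul_of_nonneg_left ht2 (by positivity : 0 ≤ x * (1 + x ^ 2 / 2))]
  have hsplit : stdCDF x * (1 - stdCDF x) = 1 / 4 - t ^ 2 := by ring
  rw [hsplit]
  exact le_of_mul_le_mul_right (hleft.trans hright) hpos

lemma stdGauss_mul_stdCDF_sub_half_le_of_ge {x : ℝ} (hx : 4 / 5 ≤ x) :
    stdGauss x * (stdCDF x - 1 / 2) ≤ x * (stdCDF x * (1 - stdCDF x)) := by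
  have hx₀ : 0 ≤ x := by linarith
  have hpos : 0 < x ^ 2 + 1 := by positivity
  have hmills : x * stdGauss x ≤ (1 - stdCDF x) * (x ^ 2 + 1) :=
    (div_le_iff₀ hpos).1 (mul_stdGauss_div_le_one_sub_stdCDF x)
  have ht : stdCDF x - 1 / 2 ≤ x ^ 2 / 2 := by
    nlinarith [stdCDF_sub_half_le hx₀, stdGauss_zero_le]
  have key : stdGauss x * (stdCDF x - 1 / 2) * (x ^ 2 + 1)
      ≤ x * (stdCDF x * (1 - stdCDF x)) * (x ^ 2 + 1) := by
    calc stdGauss x * (stdCDF x - 1 / 2) * (x ^ 2 + 1)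
        ≤ stdGauss x * (x ^ 2 * stdCDF x) := by
          rw [mul_assoc]; exact mul_le_mul_of_nonneg_left (by nlinarith) (stdGauss_nonneg x)
      _ = x * stdCDF x * (x * stdGauss x) := by ring
      _ ≤ x * stdCDF x * ((1 - stdCDF x) * (x ^ 2 + 1)) :=
          mul_le_mul_of_nonneg_left hmills (mul_nonneg hx₀ (stdCDF_nonneg x))
      _ = x * (stdCDF x * (1 - stdCDF x)) * (x ^ 2 + 1) := by ring
  exact le_of_mul_le_mul_right key hpos

lemma stdGauss_mul_stdCDF_sub_half_le {x : ℝ} (hx : 0 ≤ x) :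
    stdGauss x * (stdCDF x - 1 / 2) ≤ x * (stdCDF x * (1 - stdCDF x)) := by
  rcases le_total x (4 / 5) with hx' | hx'
  · exact stdGauss_mul_stdCDF_sub_half_le_of_le hx hx'
  · exact stdGauss_mul_stdCDF_sub_half_le_of_ge hx'

lemma contractionC_eq (x : ℝ) :
    contractionC x = 4 * ((stdGauss x + x * (stdCDF x - 1 / 2)) ^ 2 - x ^ 2 / 4) := by
  unfold contractionC; ring

lemma hasDerivAt_contractionC (x : ℝ) :
    HasDerivAt contractionC
      (8 * (stdGauss x * (stdCDF x - 1 / 2) - x * (stdCDF x * (1 - stdCDF x)))) x := by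
  have h := ((((hasDerivAt_stdGauss x).add ((hasDerivAt_id x).mul
    ((hasDerivAt_stdCDF x).sub_const (1 / 2)))).pow 2).sub
    ((hasDerivAt_pow 2 x).div_const 4)).const_mul 4
  rw [funext contractionC_eq]
  refine h.congr_deriv ?_
  simp only [id, Pi.add_apply, Pi.mul_apply]
  ring

lemma antitoneOn_contractionC : AntitoneOn contractionC (Ici 0) := by
  refine antitoneOn_of_deriv_nonpos (convex_Ici 0)
    (fun y _ ↦ (hasDerivAt_contractionC y).continuousAt.continuousWithinAt)
    (fun y _ ↦ (hasDerivAt_contractionC y).differentiableAt.differentiableWithinAt) ?_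
  intro y hy
  rw [interior_Ici] at hy
  rw [(hasDerivAt_contractionC y).deriv]
  linarith [stdGauss_mul_stdCDF_sub_half_le (le_of_lt hy)]

lemma contractionC_zero : contractionC 0 = 4 * stdGauss 0 ^ 2 := by
  simp [contractionC]

/-- The contraction factor satisfies `C(x) ≤ 2/π` for all `x ≥ 0`, with equality at
`x = 0`: `C(0) = 4·φ(0)² = 2/π < 1`. -/
theorem contractionC_le_two_div_pi :
    (∀ x : ℝ, 0 ≤ x → contractionC x ≤ 2 / Real.pi) ∧
    contractionC 0 = 4 * stdGauss 0 ^ 2 ∧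
    contractionC 0 = 2 / Real.pi ∧
    2 / Real.pi < 1 := by
  have hC₀ : contractionC 0 = 2 / π := by
    rw [contractionC_zero, stdGauss_zero_sq]
    field_simp
    ring
  refine ⟨fun x hx ↦ ?_, contractionC_zero, hC₀, ?_⟩
  · exact hC₀ ▸ antitoneOn_contractionC self_mem_Ici hx hx
  · exact (div_lt_one pi_pos).2 (by linarith [pi_gt_three])
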